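/- arXiv:math/0611920 — 2 statements merged into one kernel-verified Lean document; each statement's English description precedes it below -/
import Mathlib

section
/- Let T be an open convex cone in a finite-dimensional vector space V, let p be in the Euclidean boundary of T with p ∉ [0]_T, let z ∈ T, and set y_λ := (1−λ)p + λz for λ ∈ (0,1). Then M_T(p / y_λ) tends to 1 as λ → 0, i.e. the reverse Funk distance r_T(y_λ, p) := log M_T(p / y_λ) tends to 0. -/
/-!
Write `y_λ = (1 - λ) p + λ z`. Since `(1 - λ)⁻¹ y_λ - p = (λ / (1 - λ)) z ∈ T`, we have
`M_T(p / y_λ) ≤ (1 - λ)⁻¹`. Conversely, the numbers `t` with `t z - p ∈ closure T` are bounded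
below by some `t₀ > 0`, because `-p ∉ closure T`. If `l y_λ - p ∈ closure T`, then rescaling by
`1 - l (1 - λ)` (when positive) gives `t₀ (1 - l (1 - λ)) ≤ l λ`, so
`M_T(p / y_λ) ≥ t₀ / (λ + t₀ (1 - λ))`. Both bounds tend to `1` as `λ → 0`.
-/

open Set Filter Topology

variable {V : Type*} [NormedAddCommGroup V] [NormedSpace ℝ V] [FiniteDimensional ℝ V]

/-- An open cone: non-empty, open, convex, invariant under positive scaling, not containing 0. -/
def IsOpenCone (T : Set V) : Prop :=
  T.Nonempty ∧ IsOpen T ∧ Convex ℝ T ∧ (∀ c : ℝ, 0 < c → ∀ u ∈ T, c • u ∈ T) ∧ (0 : V) ∉ T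

/-- The gauge `M_T(y/x) = inf {λ > 0 : λ • x - y ∈ closure T}`. -/
noncomputable def funkM (T : Set V) (y x : V) : ℝ :=
  sInf {l : ℝ | 0 < l ∧ l • x - y ∈ closure T}

/-- The Funk metric `F_T(x,y) = log inf {λ > 0 : λ • y - x ∈ closure T}`. -/
noncomputable def funkF (T : Set V) (x y : V) : ℝ := Real.log (funkM T x y)

/-- The reverse Funk metric `r_T(x,y) = F_T(y,x)`. -/
noncomputable def revF (T : Set V) (x y : V) : ℝ := Real.log (funkM T y x)

/-- The Hilbert metric as the symmetrisation of the Funk metric. -/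
noncomputable def hilD (T : Set V) (x y : V) : ℝ := funkF T x y + revF T x y

/-- The dual cone, as a set of continuous linear functionals. -/
def dualCone (T : Set V) : Set (V →L[ℝ] ℝ) := {z | ∀ u ∈ T, 0 ≤ z u}

/-- The open tangent cone `τ(T,x) = {λ (w - x) : λ > 0, w ∈ T}`. -/
def openTangent (T : Set V) (x : V) : Set V :=
  {v | ∃ l : ℝ, 0 < l ∧ ∃ w ∈ T, v = l • (w - x)}

section

variable {V : Type*} [NormedAddCommGroup V] [NormedSpace ℝ V]

theorem funkM_le {T : Set V} {x y : V} {l : ℝ} (hl : 0 < l) (h : l • x - y ∈ closure T) :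
    funkM T y x ≤ l :=
  csInf_le ⟨0, fun _ hm => hm.1.le⟩ ⟨hl, h⟩

theorem le_funkM {T : Set V} {x y : V} {c : ℝ} (hne : ∃ l : ℝ, 0 < l ∧ l • x - y ∈ closure T)
    (h : ∀ l : ℝ, 0 < l → l • x - y ∈ closure T → c ≤ l) : c ≤ funkM T y x :=
  let ⟨l, hl⟩ := hne
  le_csInf ⟨l, hl⟩ fun l hl => h l hl.1 hl.2

namespace IsOpenCone

variable {T : Set V}

theorem smul_mem (hT : IsOpenCone T) {c : ℝ} (hc : 0 < c) {u : V} (hu : u ∈ T) : c • u ∈ T :=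
  hT.2.2.2.1 c hc u hu

def toConvexCone (hT : IsOpenCone T) : ConvexCone ℝ V where
  carrier := T
  smul_mem' _ hc _ hu := hT.smul_mem hc hu
  add_mem' u hu v hv := by
    convert hT.smul_mem two_pos (hT.2.2.1 hu hv (by norm_num) (by norm_num) (add_halves 1)) using 1
    rw [smul_add, smul_smul, smul_smul]
    norm_num

theorem pos_of_smul_sub_mem_closure (hT : IsOpenCone T) {z p : V} (hz : z ∈ T)
    (hp : -p ∉ closure T) {t : ℝ} (ht : t • z - p ∈ closure T) : 0 < t := by
  by_contra! ht_nonpos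
  rcases ht_nonpos.eq_or_lt with rfl | hneg
  · exact hp (by simpa using ht)
  · have hz' : (-t) • z ∈ hT.toConvexCone.closure :=
      subset_closure (hT.smul_mem (neg_pos.2 hneg) hz)
    have hsum : t • z - p + (-t) • z ∈ closure T := hT.toConvexCone.closure.add_mem ht hz'
    exact hp (by rwa [neg_smul, ← sub_eq_add_neg, sub_sub_cancel_left] at hsum)

theorem exists_pos_le_of_smul_sub_mem_closure (hT : IsOpenCone T) {z p : V} (hz : z ∈ T)
    (hp : -p ∉ closure T) : ∃ t₀ > 0, ∀ t : ℝ, t • z - p ∈ closure T → t₀ ≤ t := by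
  set S : Set ℝ := {t | t • z - p ∈ closure T}
  rcases S.eq_empty_or_nonempty with hS | hS
  · exact ⟨1, one_pos, fun t ht => (hS.subset (show t ∈ S from ht)).elim⟩
  have hS_closed : IsClosed S := isClosed_closure.preimage (by fun_prop)
  have hS_bdd : BddBelow S := ⟨0, fun t ht => (hT.pos_of_smul_sub_mem_closure hz hp ht).le⟩
  exact ⟨sInf S, hT.pos_of_smul_sub_mem_closure hz hp (hS_closed.csInf_mem hS hS_bdd),
    fun t ht => csInf_le hS_bdd ht⟩

theorem inv_one_sub_smul_segment_sub_mem (hT : IsOpenCone T) {p z : V} (hz : z ∈ T) {a : ℝ}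
    (ha : a ∈ Ioo (0 : ℝ) 1) : (1 - a)⁻¹ • ((1 - a) • p + a • z) - p ∈ T := by
  have h1a : 0 < 1 - a := sub_pos.2 ha.2
  convert hT.smul_mem (div_pos ha.1 h1a) hz using 1
  rw [smul_add, smul_smul, smul_smul, inv_mul_cancel₀ h1a.ne', one_smul, add_sub_cancel_left,
    inv_mul_eq_div]

theorem funkM_segment_le (hT : IsOpenCone T) {p z : V} (hz : z ∈ T) {a : ℝ}
    (ha : a ∈ Ioo (0 : ℝ) 1) : funkM T p ((1 - a) • p + a • z) ≤ (1 - a)⁻¹ :=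
  funkM_le (inv_pos.2 (sub_pos.2 ha.2))
    (subset_closure (hT.inv_one_sub_smul_segment_sub_mem (p := p) hz ha))

theorem le_funkM_segment (hT : IsOpenCone T) {p z : V} (hz : z ∈ T) {t₀ : ℝ} (ht₀ : 0 < t₀)
    (hmin : ∀ t : ℝ, t • z - p ∈ closure T → t₀ ≤ t) {a : ℝ} (ha : a ∈ Ioo (0 : ℝ) 1) :
    t₀ / (a + t₀ * (1 - a)) ≤ funkM T p ((1 - a) • p + a • z) := by
  have h1a : 0 < 1 - a := sub_pos.2 ha.2
  refine le_funkM ⟨_, inv_pos.2 h1a, subset_closure (hT.inv_one_sub_smul_segment_sub_mem hz ha)⟩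
    fun l hl hlT => ?_
  set c := 1 - l * (1 - a)
  have hbound : t₀ * c ≤ l * a := by
    rcases le_or_gt c 0 with hc | hc
    · nlinarith [ha.1]
    · have hrescaled : c⁻¹ • (l • ((1 - a) • p + a • z) - p) = (l * a / c) • z - p := by
        match_scalars <;> field_simp; ring
      have hmem : (l * a / c) • z - p ∈ closure T :=
        hrescaled ▸ hT.toConvexCone.closure.smul_mem (inv_pos.2 hc) hlT
      exact (le_div_iff₀ hc).1 (hmin _ hmem)
  rw [div_le_iff₀ (by nlinarith [ha.1])]
  linarith

end IsOpenCone

end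

/-- along a segment from `p ∈ ∂T`, `p ∉ [0]_T`, to `z ∈ T`,
`M_T(p / y_λ) → 1`, i.e. the reverse Funk distance `r_T(y_λ, p) → 0` as `λ → 0`. -/
theorem tendsto_funkM_segment (T : Set V) (hT : IsOpenCone T) (p : V) (hp : p ∈ frontier T)
    (hp0 : ¬ (-p ∈ closure T ∧ p ∈ closure T)) (z : V) (hz : z ∈ T) :
    Tendsto (fun l : ℝ => funkM T p ((1 - l) • p + l • z)) (𝓝[>] (0 : ℝ)) (𝓝 1) ∧
    Tendsto (fun l : ℝ => revF T ((1 - l) • p + l • z) p) (𝓝[>] (0 : ℝ)) (𝓝 0) := by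
  have hnp : -p ∉ closure T := fun h => hp0 ⟨h, frontier_subset_closure hp⟩
  obtain ⟨t₀, ht₀, hmin⟩ := hT.exists_pos_le_of_smul_sub_mem_closure hz hnp
  have hlower : Tendsto (fun a : ℝ => t₀ / (a + t₀ * (1 - a))) (𝓝[>] 0) (𝓝 1) := by
    have hcont : ContinuousAt (fun a : ℝ => t₀ / (a + t₀ * (1 - a))) 0 :=
      continuousAt_const.div (by fun_prop) (by simp [ht₀.ne'])
    simpa [ht₀.ne'] using hcont.tendsto.mono_left nhdsWithin_le_nhds
  have hupper : Tendsto (fun a : ℝ => (1 - a)⁻¹) (𝓝[>] 0) (𝓝 1) := by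
    have hcont : ContinuousAt (fun a : ℝ => (1 - a)⁻¹) 0 :=
      (continuousAt_const.sub continuousAt_id).inv₀ (by simp)
    simpa using hcont.tendsto.mono_left nhdsWithin_le_nhds
  have hM : Tendsto (fun l : ℝ => funkM T p ((1 - l) • p + l • z)) (𝓝[>] 0) (𝓝 1) := by
    refine tendsto_of_tendsto_of_tendsto_of_le_of_le' hlower hupper ?_ ?_ <;>
      filter_upwards [Ioo_mem_nhdsGT one_pos] with a ha
    · exact hT.le_funkM_segment hz ht₀ hmin ha
    · exact hT.funkM_segment_le hz ha
  refine ⟨hM, ?_⟩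
  simpa [revF, Function.comp_def] using (Real.continuousAt_log one_ne_zero).tendsto.comp hM
end

section
/- Let T be an open convex cone in a finite-dimensional vector space with basepoint b ∈ T, and for x ∈ T define j_{T,x}(y) := M_T(y/x)/M_T(b/x) for y ∈ V. Then the Legendre–Fenchel transform of j_{T,x} is the indicator function of the set Z_{T,x} := T* ∩ {z ∈ V* : M_T(b/x)·⟨z,x⟩ ≤ 1}. -/
open Set Filter Topology

variable {V : Type*} [NormedAddCommGroup V] [NormedSpace ℝ V] [FiniteDimensional ℝ V]

/- ### Auxiliary lemmas -/

lemma aux_add_mem {T : Set V} (hT : IsOpenCone T) {u v : V} (hu : u ∈ T) (hv : v ∈ T) :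
    u + v ∈ T := by
  have h := hT.2.2.1 hu hv (by norm_num : (0:ℝ) ≤ 1/2) (by norm_num : (0:ℝ) ≤ 1/2) (by norm_num)
  have h2 := hT.2.2.2.1 2 (by norm_num) _ h
  have : (2:ℝ) • ((1/2:ℝ) • u + (1/2:ℝ) • v) = u + v := by
    rw [smul_add, smul_smul, smul_smul]; norm_num
  rwa [this] at h2

lemma aux_bddBelow (T : Set V) (y x : V) :
    BddBelow {l : ℝ | 0 < l ∧ l • x - y ∈ closure T} :=
  ⟨0, fun l hl => hl.1.le⟩

lemma funkM_nonneg (T : Set V) (y x : V) : 0 ≤ funkM T y x :=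
  Real.sInf_nonneg (fun l hl => hl.1.le)

lemma aux_nonempty {T : Set V} (hT : IsOpenCone T) {x : V} (hx : x ∈ T) (y : V) :
    {l : ℝ | 0 < l ∧ l • x - y ∈ closure T}.Nonempty := by
  have htend : Tendsto (fun l : ℝ => x - l⁻¹ • y) atTop (𝓝 x) := by
    have h0 : Tendsto (fun l : ℝ => l⁻¹) atTop (𝓝 (0:ℝ)) := tendsto_inv_atTop_zero
    have := (h0.smul_const y)
    have h2 : Tendsto (fun l : ℝ => x - l⁻¹ • y) atTop (𝓝 (x - (0:ℝ) • y)) :=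
      tendsto_const_nhds.sub this
    simpa using h2
  have hev : ∀ᶠ l : ℝ in atTop, x - l⁻¹ • y ∈ T :=
    htend.eventually (hT.2.1.eventually_mem hx)
  obtain ⟨l, hl1, hl2⟩ := (hev.and (eventually_gt_atTop 0)).exists
  refine ⟨l, hl2, subset_closure ?_⟩
  have := hT.2.2.2.1 l hl2 _ hl1
  have heq : l • (x - l⁻¹ • y) = l • x - y := by
    rw [smul_sub, smul_smul, mul_inv_cancel₀ hl2.ne', one_smul]
  rwa [heq] at this

lemma zero_mem_closure {T : Set V} (hT : IsOpenCone T) : (0:V) ∈ closure T := by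
  obtain ⟨u, hu⟩ := hT.1
  have h0 : Tendsto (fun n : ℕ => (1/(n+1) : ℝ)) atTop (𝓝 0) :=
    tendsto_one_div_add_atTop_nhds_zero_nat
  have htend : Tendsto (fun n : ℕ => (1/(n+1) : ℝ) • u) atTop (𝓝 (0:V)) := by
    simpa using h0.smul_const u
  exact mem_closure_of_tendsto htend
    (Eventually.of_forall fun n => hT.2.2.2.1 _ (by positivity) _ hu)

lemma dual_nonneg_closure {T : Set V} {z : V →L[ℝ] ℝ} (hz : z ∈ dualCone T) :
    ∀ v ∈ closure T, 0 ≤ z v := by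
  have : closure T ⊆ {v | 0 ≤ z v} :=
    closure_minimal hz (isClosed_le continuous_const z.continuous)
  exact fun v hv => this hv

lemma zy_le_funkM {T : Set V} (hT : IsOpenCone T) {x : V} (hx : x ∈ T)
    {z : V →L[ℝ] ℝ} (hz : z ∈ dualCone T) (y : V) : z y ≤ funkM T y x * z x := by
  have hne := aux_nonempty hT hx y
  have hzx : 0 ≤ z x := hz x hx
  have hkey : ∀ l ∈ {l : ℝ | 0 < l ∧ l • x - y ∈ closure T}, z y ≤ l * z x := by
    intro l hl
    have := dual_nonneg_closure hz _ hl.2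
    have : 0 ≤ l * z x - z y := by simpa [map_sub, map_smul, smul_eq_mul] using this
    linarith
  rcases eq_or_lt_of_le hzx with h0 | hpos
  · obtain ⟨l, hl⟩ := hne
    have := hkey l hl
    rw [← h0] at this ⊢
    simpa using this
  · have : z y / z x ≤ funkM T y x :=
      le_csInf hne (fun l hl => (div_le_iff₀ hpos).2 (hkey l hl))
    calc z y = (z y / z x) * z x := by field_simp
    _ ≤ funkM T y x * z x := mul_le_mul_of_nonneg_right this hzx

lemma neg_notMem_closure {T : Set V} (hT : IsOpenCone T) {u : V} (hu : u ∈ T) :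
    -u ∉ closure T := by
  intro h
  have hmem : (1/2 : ℝ) • u + (1/2 : ℝ) • (-u) ∈ interior T :=
    hT.2.2.1.combo_interior_closure_mem_interior
      (by rwa [hT.2.1.interior_eq]) h (by norm_num) (by norm_num) (by norm_num)
  have : (0:V) ∈ interior T := by
    have : (1/2 : ℝ) • u + (1/2 : ℝ) • (-u) = 0 := by rw [smul_neg]; abel
    rwa [this] at hmem
  exact hT.2.2.2.2 (interior_subset this)

lemma funkM_pos {T : Set V} (hT : IsOpenCone T) {x b : V} (hx : x ∈ T) (hb : b ∈ T) :
    0 < funkM T b x := by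
  have hnb : -b ∉ closure T := neg_notMem_closure hT hb
  have hopen : IsOpen (closure T)ᶜ := isClosed_closure.isOpen_compl
  obtain ⟨ε, hε, hball⟩ := Metric.isOpen_iff.1 hopen _ hnb
  have hxne : x ≠ 0 := fun h => hT.2.2.2.2 (h ▸ hx)
  have hxnorm : 0 < ‖x‖ := norm_pos_iff.2 hxne
  have hlb : ∀ l ∈ {l : ℝ | 0 < l ∧ l • x - b ∈ closure T}, ε / ‖x‖ ≤ l := by
    intro l hl
    by_contra hcon
    push_neg at hcon
    have hdist : dist (l • x - b) (-b) < ε := by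
      rw [dist_eq_norm]
      have : l • x - b - -b = l • x := by abel
      rw [this, norm_smul, Real.norm_eq_abs, abs_of_pos hl.1]
      calc l * ‖x‖ < (ε / ‖x‖) * ‖x‖ := by
            exact mul_lt_mul_of_pos_right hcon hxnorm
      _ = ε := div_mul_cancel₀ ε hxnorm.ne'
    exact hball hdist hl.2
  have : ε / ‖x‖ ≤ funkM T b x := le_csInf (aux_nonempty hT hx b) hlb
  exact lt_of_lt_of_le (by positivity) this

lemma funkM_smul_self_le {T : Set V} (hT : IsOpenCone T) {x : V} (hx : x ∈ T)
    {t : ℝ} (ht : 0 < t) : funkM T (t • x) x ≤ t :=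
  csInf_le (aux_bddBelow T _ _) ⟨ht, by simpa using zero_mem_closure hT⟩

lemma funkM_eq_zero_of_Ioi {T : Set V} (h : Ioi (0:ℝ) ⊆ {l : ℝ | 0 < l ∧ l • x - y ∈ closure T}) :
    funkM T y x = 0 := by
  refine le_antisymm ?_ (funkM_nonneg T y x)
  have := csInf_le_csInf (aux_bddBelow T y x) (nonempty_Ioi (a := (0:ℝ))) h
  rwa [csInf_Ioi] at this

lemma funkM_zero {T : Set V} (hT : IsOpenCone T) {x : V} (hx : x ∈ T) :
    funkM T 0 x = 0 := by
  apply funkM_eq_zero_of_Ioi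
  intro l hl
  exact ⟨hl, subset_closure (by simpa using hT.2.2.2.1 l hl _ hx)⟩

lemma funkM_neg_cone {T : Set V} (hT : IsOpenCone T) {x u : V} (hx : x ∈ T) (hu : u ∈ T)
    {t : ℝ} (ht : 0 < t) : funkM T (-(t • u)) x = 0 := by
  apply funkM_eq_zero_of_Ioi
  intro l hl
  refine ⟨hl, subset_closure ?_⟩
  have h1 : l • x ∈ T := hT.2.2.2.1 l hl _ hx
  have h2 : t • u ∈ T := hT.2.2.2.1 t ht _ hu
  have := aux_add_mem hT h1 h2
  simpa [sub_neg_eq_add] using this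

/-- the Legendre–Fenchel transform of `j_{T,x}(y) = M_T(y/x)/M_T(b/x)` is the
indicator function of `Z_{T,x} = T* ∩ {z : M_T(b/x)⟨z,x⟩ ≤ 1}`. -/
theorem legendre_transform_funk_gauge (T : Set V) (hT : IsOpenCone T) (b : V) (hb : b ∈ T)
    (x : V) (hx : x ∈ T) :
    (∀ z : V →L[ℝ] ℝ, z ∈ dualCone T ∧ funkM T b x * z x ≤ 1 →
        (⨆ y : V, ((z y - funkM T y x / funkM T b x : ℝ) : EReal)) = 0) ∧
    (∀ z : V →L[ℝ] ℝ, ¬ (z ∈ dualCone T ∧ funkM T b x * z x ≤ 1) →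
        (⨆ y : V, ((z y - funkM T y x / funkM T b x : ℝ) : EReal)) = ⊤) := by
  have hμ : 0 < funkM T b x := funkM_pos hT hx hb
  set μ := funkM T b x with hμdef
  constructor
  · rintro z ⟨hz, hzx⟩
    refine le_antisymm (iSup_le fun y => ?_) ?_
    · have h1 : z y ≤ funkM T y x * z x := zy_le_funkM hT hx hz y
      have h2 : z x ≤ 1 / μ := by
        rw [le_div_iff₀ hμ]; linarith [hzx, mul_comm (z x) μ]
      have h3 : funkM T y x * z x ≤ funkM T y x / μ := by
        rw [div_eq_mul_one_div]
        exact mul_le_mul_of_nonneg_left h2 (funkM_nonneg T y x)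
      have : z y - funkM T y x / μ ≤ 0 := by linarith
      exact_mod_cast EReal.coe_nonpos.2 this
    · refine le_iSup_of_le 0 ?_
      have : (z 0 - funkM T 0 x / μ : ℝ) = 0 := by
        simp [funkM_zero hT hx]
      rw [this]
      exact_mod_cast le_rfl
  · intro z hcl
    rw [iSup_eq_top]
    have key : ∀ r : ℝ, ∃ y : V, r < z y - funkM T y x / μ := by
      intro r
      by_cases hzT : z ∈ dualCone T
      · have h1 : 1 < μ * z x := lt_of_not_ge fun h => hcl ⟨hzT, h⟩
        have hd : 0 < z x - 1/μ := by
          rw [sub_pos, div_lt_iff₀ hμ]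
          linarith [mul_comm (z x) μ]
        set d := z x - 1/μ with hddef
        set t := (|r| + 1) / d with htdef
        have ht : 0 < t := by positivity
        refine ⟨t • x, ?_⟩
        have hM : funkM T (t • x) x ≤ t := funkM_smul_self_le hT hx ht
        have hMμ : funkM T (t • x) x / μ ≤ t / μ := by gcongr
        have hz_eval : z (t • x) = t * z x := by simp [map_smul]
        have htd : t * d = |r| + 1 := div_mul_cancel₀ _ hd.ne'
        have hstep : t * z x - t / μ = t * d := by
          rw [hddef]; ring
        have : r < t * z x - t / μ := by
          rw [hstep, htd]
          have := abs_nonneg r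
          have := le_abs_self r
          linarith
        rw [hz_eval]
        linarith
      · simp only [dualCone, mem_setOf_eq, not_forall] at hzT
        obtain ⟨u, hu, hzu⟩ := hzT
        push_neg at hzu
        set c := -(z u) with hcdef
        have hc : 0 < c := by simp [hcdef]; linarith
        set t := (|r| + 1) / c with htdef
        have ht : 0 < t := by positivity
        refine ⟨-(t • u), ?_⟩
        have hM : funkM T (-(t • u)) x = 0 := funkM_neg_cone hT hx hu ht
        have hz_eval : z (-(t • u)) = t * c := by
          rw [map_neg, map_smul, smul_eq_mul, hcdef]; ring
        rw [hM, hz_eval]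
        have htc : t * c = |r| + 1 := div_mul_cancel₀ _ hc.ne'
        rw [htc]
        have := abs_nonneg r
        have := le_abs_self r
        simp only [zero_div, sub_zero]
        linarith
    intro c hc
    induction c using EReal.rec with
    | bot =>
      obtain ⟨y, _⟩ := key 0
      exact ⟨y, EReal.bot_lt_coe _⟩
    | coe r =>
      obtain ⟨y, hy⟩ := key r
      exact ⟨y, EReal.coe_lt_coe_iff.2 hy⟩
    | top => exact absurd hc (lt_irrefl _)
end
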